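/- Let h : ZMod N × ZMod M → ℝ be a mean-preserving kernel, g : ZMod N × ZMod M → ℝ an image with Σ_{n,m} g(n,m) = 0, λ > 0, and define E(f) = (1/2)·‖h ⋆ f − g‖₂² + λ·TV_a(f). For any image z, let μ = (NM)⁻¹·Σ_{n,m} z(n,m) be its mean and z̃ = z − μ·𝟙 (where 𝟙 is the all-ones image). Then E(z) = E(z̃) + (NM/2)·μ². In particular, every global minimizer of E over all images has zero mean. -/

import Mathlib

/-- Periodic discrete partial difference in the first (column) direction. -/
def gradX {N M : ℕ} (f : ZMod N × ZMod M → ℝ) : ZMod N × ZMod M → ℝ :=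
  fun p => f p - f (p.1 - 1, p.2)

/-- Periodic discrete partial difference in the second (row) direction. -/
def gradY {N M : ℕ} (f : ZMod N × ZMod M → ℝ) : ZMod N × ZMod M → ℝ :=
  fun p => f p - f (p.1, p.2 - 1)

/-- Anisotropic total variation. -/
noncomputable def TVa {N M : ℕ} [NeZero N] [NeZero M] (f : ZMod N × ZMod M → ℝ) : ℝ :=
  ∑ p : ZMod N × ZMod M, (|gradX f p| + |gradY f p|)

/-- Circular (periodic) convolution of a kernel `h` with an image `f`. -/
noncomputable def conv {N M : ℕ} [NeZero N] [NeZero M]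
    (h f : ZMod N × ZMod M → ℝ) : ZMod N × ZMod M → ℝ :=
  fun p => ∑ q : ZMod N × ZMod M, h q * f (p - q)

/-- The `ℓ₂`-norm of an image. -/
noncomputable def l2norm {N M : ℕ} [NeZero N] [NeZero M]
    (u : ZMod N × ZMod M → ℝ) : ℝ :=
  Real.sqrt (∑ p : ZMod N × ZMod M, (u p) ^ 2)

/-- The TV-regularized restoration functional
`E(f) = (1/2)·‖h ⋆ f − g‖₂² + λ·TV_a(f)`. -/
noncomputable def Efun {N M : ℕ} [NeZero N] [NeZero M]
    (h g : ZMod N × ZMod M → ℝ) (lam : ℝ) (f : ZMod N × ZMod M → ℝ) : ℝ :=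
  (1 / 2) * (∑ p : ZMod N × ZMod M, (conv h f p - g p) ^ 2) + lam * TVa f


/-!
Shifting an image by a constant `c` leaves `TV_a` unchanged and, since `h` preserves means, shifts
`h ⋆ f` by the same constant. As `g` has zero sum, the fidelity term changes by
`-2c Σ (h ⋆ f) + NM c² = -2c Σ f + NM c²`. With `c = μ` this is `-NM μ²`, which gives the
identity; a minimizer `z` then satisfies `E(z) ≤ E(z̃) = E(z) - (NM/2) μ²`, forcing `μ = 0`.
-/

open Finset

section Shift

variable {N M : ℕ} [NeZero N] [NeZero M]

theorem TVa_sub_const (f : ZMod N × ZMod M → ℝ) (c : ℝ) :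
    TVa (fun p => f p - c) = TVa f := by
  simp only [TVa, gradX, gradY, sub_sub_sub_cancel_right]

theorem conv_sub_const {h : ZMod N × ZMod M → ℝ} (hmean : ∑ p, h p = 1)
    (f : ZMod N × ZMod M → ℝ) (c : ℝ) (p : ZMod N × ZMod M) :
    conv h (fun q => f q - c) p = conv h f p - c := by
  simp only [conv, mul_sub, sum_sub_distrib, ← sum_mul, hmean, one_mul]

theorem sum_conv (h f : ZMod N × ZMod M → ℝ) :
    ∑ p, conv h f p = (∑ q, h q) * ∑ p, f p := by
  simp only [conv]
  rw [sum_comm, sum_mul]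
  refine sum_congr rfl fun q _ => ?_
  rw [mul_sum]
  exact Fintype.sum_equiv (Equiv.subRight q) _ _ fun p => rfl

theorem Efun_sub_const {h g : ZMod N × ZMod M → ℝ} (hmean : ∑ p, h p = 1)
    (hg : ∑ p, g p = 0) (lam : ℝ) (f : ZMod N × ZMod M → ℝ) (c : ℝ) :
    Efun h g lam (fun p => f p - c) =
      Efun h g lam f - c * ∑ p, f p + ((N : ℝ) * M / 2) * c ^ 2 := by
  have hfid : ∑ p, (conv h (fun q => f q - c) p - g p) ^ 2 =
      ∑ p, (conv h f p - g p) ^ 2 - 2 * c * ∑ p, (conv h f p - g p) + (N * M : ℕ) • c ^ 2 := by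
    have hcard : #(univ : Finset (ZMod N × ZMod M)) = N * M := by simp
    rw [← hcard, ← sum_const, mul_sum, ← sum_sub_distrib, ← sum_add_distrib]
    refine sum_congr rfl fun p _ => ?_
    rw [conv_sub_const hmean]
    ring
  rw [sum_sub_distrib, hg, sum_conv, hmean, sub_zero, one_mul, nsmul_eq_mul] at hfid
  simp only [Efun, hfid, TVa_sub_const]
  push_cast
  ring

end Shift

theorem stmt17_general {N M : ℕ} [NeZero N] [NeZero M] (h g : ZMod N × ZMod M → ℝ)
    (hmean : ∑ p : ZMod N × ZMod M, h p = 1)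
    (hg : ∑ p : ZMod N × ZMod M, g p = 0) (lam : ℝ) :
    (∀ z : ZMod N × ZMod M → ℝ,
      Efun h g lam z =
        Efun h g lam
          (fun p => z p - (∑ q : ZMod N × ZMod M, z q) / ((N : ℝ) * (M : ℝ))) +
        ((N : ℝ) * (M : ℝ) / 2) *
          ((∑ q : ZMod N × ZMod M, z q) / ((N : ℝ) * (M : ℝ))) ^ 2) ∧
    (∀ z : ZMod N × ZMod M → ℝ,
      (∀ w : ZMod N × ZMod M → ℝ, Efun h g lam z ≤ Efun h g lam w) →
        ∑ p : ZMod N × ZMod M, z p = 0) := by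
  have hNM : (0 : ℝ) < N * M := by
    have := NeZero.pos N; have := NeZero.pos M; positivity
  have hcentre : ∀ z : ZMod N × ZMod M → ℝ,
      Efun h g lam z = Efun h g lam (fun p => z p - (∑ q, z q) / (N * M)) +
        ((N : ℝ) * M / 2) * ((∑ q, z q) / (N * M)) ^ 2 := by
    intro z
    rw [Efun_sub_const hmean hg]
    field_simp
    ring
  refine ⟨hcentre, fun z hmin => ?_⟩
  have hdefect : ((N : ℝ) * M / 2) * ((∑ q, z q) / (N * M)) ^ 2 ≤ 0 := by
    linarith [hcentre z, hmin (fun p => z p - (∑ q, z q) / (N * M))]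
  have hμ : ((∑ q, z q) / ((N : ℝ) * M)) ^ 2 = 0 :=
    (nonpos_of_mul_nonpos_right hdefect (half_pos hNM)).antisymm (sq_nonneg _)
  simpa [hNM.ne'] using hμ

theorem stmt17 {N M : ℕ} [NeZero N] [NeZero M] (h g : ZMod N × ZMod M → ℝ)
    (hmean : ∑ p : ZMod N × ZMod M, h p = 1)
    (hg : ∑ p : ZMod N × ZMod M, g p = 0) (lam : ℝ) (hlam : 0 < lam) :
    (∀ z : ZMod N × ZMod M → ℝ,
      Efun h g lam z =
        Efun h g lam
          (fun p => z p - (∑ q : ZMod N × ZMod M, z q) / ((N : ℝ) * (M : ℝ))) +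
        ((N : ℝ) * (M : ℝ) / 2) *
          ((∑ q : ZMod N × ZMod M, z q) / ((N : ℝ) * (M : ℝ))) ^ 2) ∧
    (∀ z : ZMod N × ZMod M → ℝ,
      (∀ w : ZMod N × ZMod M → ℝ, Efun h g lam z ≤ Efun h g lam w) →
        ∑ p : ZMod N × ZMod M, z p = 0) :=
  stmt17_general h g hmean hg lam
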